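/- arXiv:nlin/0410057 — 8 statements merged into one kernel-verified Lean document; each statement's English description precedes it below -/
import Mathlib

section
/- Let V be a finite-dimensional real vector space, Π : V* → V a skew-symmetric linear map (i.e., ⟨α, Π β⟩ = -⟨β, Π α⟩), Ω : V → V* a skew-symmetric linear map, and suppose there exist α₁,...,α_r ∈ V* and linearly independent Z₁,...,Z_r ∈ V with αᵢ(Z_j) = δᵢⱼ, ker Π = span{α₁,...,α_r}, ker Ω = span{Z₁,...,Z_r}, and the partition of unity id_V = Π∘Ω + Σᵢ Zᵢ ⊗ αᵢ holds. Then the dual partition of unity id_{V*} = Ω∘Π + Σᵢ αᵢ ⊗ Zᵢ also holds. -/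
open Module

/-- In a dual Poisson-presymplectic pair, the partition of unity on V
implies the dual partition of unity on V*. -/
theorem dual_partition_of_unity {V : Type*} [AddCommGroup V] [Module ℝ V]
    [FiniteDimensional ℝ V] {r : ℕ}
    (P : Dual ℝ V →ₗ[ℝ] V) (Om : V →ₗ[ℝ] Dual ℝ V)
    (hPskew : ∀ a b : Dual ℝ V, a (P b) = - b (P a))
    (hOmskew : ∀ v w : V, Om v w = - Om w v)
    (α : Fin r → Dual ℝ V) (Z : Fin r → V)
    (hZind : LinearIndependent ℝ Z)
    (hdual : ∀ i j, α i (Z j) = if i = j then 1 else 0)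
    (hkerP : LinearMap.ker P = Submodule.span ℝ (Set.range α))
    (hkerOm : LinearMap.ker Om = Submodule.span ℝ (Set.range Z))
    (hpart : ∀ v : V, P (Om v) + ∑ i, α i v • Z i = v) :
    ∀ F : Dual ℝ V, Om (P F) + ∑ i, F (Z i) • α i = F := by
  intro F
  ext v
  have hF : F (P (Om v)) + ∑ i, α i v * F (Z i) = F v := by
    conv_rhs => rw [← hpart v]
    simp [smul_eq_mul]
  have key : F (P (Om v)) = Om (P F) v := by
    rw [hPskew F (Om v), hOmskew v (P F), neg_neg]
  simp only [LinearMap.add_apply, LinearMap.coe_sum, Finset.sum_apply,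
    LinearMap.smul_apply, smul_eq_mul]
  rw [← key, ← hF]
  ring_nf
  congr 1
  exact Finset.sum_congr rfl fun i _ => mul_comm _ _
end

section
/- Let (Π₀, Ω₀) be a dual pair on a finite-dimensional vector space V with ker Π₀ = span{α₁,...,α_r} and ker Ω₀ = span{Z₁,...,Z_r}, and let Π : V* → V be any skew-symmetric linear map. Then Π₀(Ω₀ Π Ω₀)Π₀ = Π - Σᵢ Xᵢ ∧ Zᵢ + (1/2) Σ_{i,j} c_{ij} Zᵢ ∧ Z_j, where Xᵢ = Π αᵢ, c_{ij} = ⟨αᵢ, Π α_j⟩, and for u, v ∈ V the bivector u ∧ v acts on V* by (u ∧ v)(β) = β(v)·u - β(u)·v. -/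
open Module

/-- the deformation formula
Π₀(Ω₀ Π Ω₀)Π₀ = Π - Σᵢ Xᵢ ∧ Zᵢ + ½ Σ c_ij Zᵢ ∧ Z_j,
where Xᵢ = Π αᵢ, c_ij = ⟨αᵢ, Π α_j⟩ and (u ∧ v)(β) = β(v)u - β(u)v. -/
theorem deformation_formula {V : Type*} [AddCommGroup V] [Module ℝ V]
    [FiniteDimensional ℝ V] {r : ℕ}
    (P0 : Dual ℝ V →ₗ[ℝ] V) (Om0 : V →ₗ[ℝ] Dual ℝ V)
    (hP0skew : ∀ a b : Dual ℝ V, a (P0 b) = - b (P0 a))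
    (hOm0skew : ∀ v w : V, Om0 v w = - Om0 w v)
    (α : Fin r → Dual ℝ V) (Z : Fin r → V)
    (hZind : LinearIndependent ℝ Z)
    (hdual : ∀ i j, α i (Z j) = if i = j then 1 else 0)
    (hkerP0 : LinearMap.ker P0 = Submodule.span ℝ (Set.range α))
    (hkerOm0 : LinearMap.ker Om0 = Submodule.span ℝ (Set.range Z))
    (hpart : ∀ v : V, P0 (Om0 v) + ∑ i, α i v • Z i = v)
    (P : Dual ℝ V →ₗ[ℝ] V)
    (hPskew : ∀ a b : Dual ℝ V, a (P b) = - b (P a)) :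
    ∀ β : Dual ℝ V,
      P0 (Om0 (P (Om0 (P0 β)))) =
        P β - (∑ i, (β (Z i) • P (α i) - β (P (α i)) • Z i))
          + (1/2 : ℝ) • ∑ i, ∑ j, α i (P (α j)) • (β (Z j) • Z i - β (Z i) • Z j) := by
  intro β
  have hOm : Om0 (P0 β) = β - ∑ i, β (Z i) • α i := by
    ext v
    have h2 : β (P0 (Om0 v)) = Om0 (P0 β) v := by
      rw [hP0skew β (Om0 v), hOm0skew v (P0 β)]; ring
    have h1 := congrArg β (hpart v)
    rw [map_add, map_sum, h2] at h1
    simp only [map_smul, smul_eq_mul] at h1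
    simp only [LinearMap.sub_apply, LinearMap.coe_sum, Finset.sum_apply,
      LinearMap.smul_apply, smul_eq_mul]
    have : ∑ i, β (Z i) * α i v = ∑ i, α i v * β (Z i) := by
      exact Finset.sum_congr rfl fun i _ => mul_comm _ _
    linarith [this ▸ h1]
  have hP : P (Om0 (P0 β)) = P β - ∑ i, β (Z i) • P (α i) := by
    rw [hOm]; simp
  have h4 : ∀ i : Fin r, α i (P β - ∑ j, β (Z j) • P (α j))
      = - β (P (α i)) - ∑ j, β (Z j) * α i (P (α j)) := by
    intro i
    rw [map_sub, map_sum, hPskew (α i) β]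
    simp [map_smul]
  have key : P0 (Om0 (P (Om0 (P0 β)))) =
      (P β - ∑ i, β (Z i) • P (α i))
        - ∑ i, (- β (P (α i)) - ∑ j, β (Z j) * α i (P (α j))) • Z i := by
    rw [hP]
    have := hpart (P β - ∑ i, β (Z i) • P (α i))
    rw [eq_sub_of_add_eq this]
    congr 1
    exact Finset.sum_congr rfl fun i _ => by rw [h4 i]
  rw [key]
  have hcskew : ∀ i j : Fin r, α i (P (α j)) = - α j (P (α i)) := fun i j => hPskew _ _
  have hsum : ∑ i, ∑ j, α i (P (α j)) • (β (Z j) • Z i - β (Z i) • Z j)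
      = (2:ℝ) • ∑ i, ∑ j, (β (Z j) * α i (P (α j))) • Z i := by
    have e1 : ∑ i, ∑ j, α i (P (α j)) • (β (Z j) • Z i - β (Z i) • Z j)
        = (∑ i, ∑ j, (β (Z j) * α i (P (α j))) • Z i)
          - ∑ i, ∑ j, (β (Z i) * α i (P (α j))) • Z j := by
      rw [← Finset.sum_sub_distrib]
      refine Finset.sum_congr rfl fun i _ => ?_
      rw [← Finset.sum_sub_distrib]
      refine Finset.sum_congr rfl fun j _ => ?_
      rw [smul_sub, smul_smul, smul_smul, mul_comm ((α i) (P (α j))) (β (Z j)), mul_comm ((α i) (P (α j))) (β (Z i))]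
    have e2 : ∑ i, ∑ j, (β (Z i) * α i (P (α j))) • Z j
        = - ∑ i, ∑ j, (β (Z j) * α i (P (α j))) • Z i := by
      rw [Finset.sum_comm, ← Finset.sum_neg_distrib]
      refine Finset.sum_congr rfl fun i _ => ?_
      rw [← Finset.sum_neg_distrib]
      refine Finset.sum_congr rfl fun j _ => ?_
      rw [hcskew j i]
      simp [neg_smul]
    rw [e1, e2, two_smul]
    abel
  rw [hsum]
  rw [smul_smul]
  norm_num
  simp only [sub_smul, neg_smul, Finset.sum_sub_distrib, Finset.sum_neg_distrib, smul_sub, Finset.sum_smul]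
  abel
end

section
/- Let (Π₀, Ω₀) be a dual pair on a finite-dimensional vector space V with ker Ω₀ = span{Z₁,...,Z_r} and ker Π₀ = span{α₁,...,α_r}, and let Π : V* → V be skew-symmetric. Define Π_d = Π - Σᵢ Xᵢ ∧ Zᵢ + (1/2)Σ_{i,j} c_{ij} Zᵢ ∧ Z_j with Xᵢ = Π αᵢ, c_{ij} = ⟨αᵢ, Π α_j⟩. Then ker Π₀ ⊆ ker Π_d, i.e., Π_d α_k = 0 for all k = 1,...,r. -/
open Module

/-- the deformed bivector Π_d annihilates the kernel of Π₀:
Π_d α_k = 0 for all k. -/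
theorem deformed_kernel {V : Type*} [AddCommGroup V] [Module ℝ V]
    [FiniteDimensional ℝ V] {r : ℕ}
    (P0 : Dual ℝ V →ₗ[ℝ] V) (Om0 : V →ₗ[ℝ] Dual ℝ V)
    (hP0skew : ∀ a b : Dual ℝ V, a (P0 b) = - b (P0 a))
    (hOm0skew : ∀ v w : V, Om0 v w = - Om0 w v)
    (α : Fin r → Dual ℝ V) (Z : Fin r → V)
    (hZind : LinearIndependent ℝ Z)
    (hdual : ∀ i j, α i (Z j) = if i = j then 1 else 0)
    (hkerP0 : LinearMap.ker P0 = Submodule.span ℝ (Set.range α))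
    (hkerOm0 : LinearMap.ker Om0 = Submodule.span ℝ (Set.range Z))
    (hpart : ∀ v : V, P0 (Om0 v) + ∑ i, α i v • Z i = v)
    (P : Dual ℝ V →ₗ[ℝ] V)
    (hPskew : ∀ a b : Dual ℝ V, a (P b) = - b (P a)) :
    ∀ k : Fin r,
      P (α k) - (∑ i, (α k (Z i) • P (α i) - α k (P (α i)) • Z i))
        + (1/2 : ℝ) • ∑ i, ∑ j, α i (P (α j)) • (α k (Z j) • Z i - α k (Z i) • Z j)
      = 0 := by
  intro k
  have h : ∀ i, α i (P (α k)) = -(α k (P (α i))) := fun i => hPskew _ _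
  have hA : (∑ i, (α k (Z i) • P (α i) - α k (P (α i)) • Z i))
      = P (α k) - ∑ i, α k (P (α i)) • Z i := by
    rw [Finset.sum_sub_distrib]
    congr 1
    simp [hdual, ite_smul]
  have hB : (∑ i, ∑ j, α i (P (α j)) • (α k (Z j) • Z i - α k (Z i) • Z j))
      = (-2 : ℝ) • ∑ i, α k (P (α i)) • Z i := by
    simp only [hdual, smul_sub, smul_ite, smul_zero, ite_smul, one_smul, zero_smul,
      Finset.sum_sub_distrib, Finset.sum_ite_eq, Finset.sum_ite_eq', Finset.mem_univ, if_true]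
    simp only [h, neg_smul, Finset.sum_neg_distrib]
    rw [Finset.sum_comm]
    simp only [Finset.sum_ite_eq, Finset.mem_univ, if_true]
    module
  rw [hA, hB]
  module
end

section
/- Let (Π₀, Ω₀) be a dual pair on a finite-dimensional vector space V with r = 1: ker Π₀ = span{α}, ker Ω₀ = span{Z}, α(Z) = 1, id = Π₀Ω₀ + Z ⊗ α. Let Π₁ : V* → V be skew-symmetric, set X₁ = Π₁ α and Π_{1d} = Π₀Ω₀Π₁Ω₀Π₀. Then Π_{1d} = Π₁ - X₁ ∧ Z. -/
open Module

/-- one-Casimir deformation formula Π_{1d} = Π₁ - X₁ ∧ Z, i.e.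
Π₀Ω₀Π₁Ω₀Π₀ β = Π₁ β - (β(Z)·X₁ - β(X₁)·Z) with X₁ = Π₁ α. -/
theorem one_casimir_deformation {V : Type*} [AddCommGroup V] [Module ℝ V]
    [FiniteDimensional ℝ V]
    (P0 : Dual ℝ V →ₗ[ℝ] V) (Om0 : V →ₗ[ℝ] Dual ℝ V)
    (hP0skew : ∀ a b : Dual ℝ V, a (P0 b) = - b (P0 a))
    (hOm0skew : ∀ v w : V, Om0 v w = - Om0 w v)
    (α : Dual ℝ V) (Z : V)
    (hdual : α Z = 1)
    (hkerP0 : LinearMap.ker P0 = Submodule.span ℝ {α})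
    (hkerOm0 : LinearMap.ker Om0 = Submodule.span ℝ {Z})
    (hpart : ∀ v : V, P0 (Om0 v) + α v • Z = v)
    (P1 : Dual ℝ V →ₗ[ℝ] V)
    (hP1skew : ∀ a b : Dual ℝ V, a (P1 b) = - b (P1 a)) :
    ∀ β : Dual ℝ V,
      P0 (Om0 (P1 (Om0 (P0 β)))) = P1 β - (β Z • P1 α - β (P1 α) • Z) := by
  have hpart' : ∀ v : V, P0 (Om0 v) = v - α v • Z := by
    intro v; have := hpart v; linear_combination (norm := module) this
  have hOm0P0 : ∀ β : Dual ℝ V, Om0 (P0 β) = β - β Z • α := by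
    intro β
    ext v
    have h1 : Om0 (P0 β) v = - Om0 v (P0 β) := hOm0skew _ _
    have h2 : Om0 v (P0 β) = - β (P0 (Om0 v)) := hP0skew _ _
    rw [h1, h2, neg_neg, hpart' v]
    simp [mul_comm]
  intro β
  have hαX : α (P1 α) = 0 := by
    have := hP1skew α α; linarith
  have hβ : α (P1 β) = - β (P1 α) := hP1skew α β
  rw [hOm0P0 β]
  rw [map_sub, map_smul, hpart']
  rw [map_sub, map_smul, hαX, smul_zero, sub_zero, hβ]
  module
end

section
/- One-Casimir bi-presymplectic chain (pointwise, linear-algebraic version): Let (Π₀, Ω₀) be a dual pair on V with ker Π₀ = span{dH₀}, ker Ω₀ = span{Z}, ⟨dH₀, Z⟩ = 1. Let Π₁ be skew-symmetric, and let dH₀, dH₁, ..., dH_{n+1} ∈ V* with dH_{n+1} = 0 satisfy the chain Π₀ dHᵢ = Xᵢ = Π₁ dH_{i-1} for i = 1,...,n+1 (with X₀ := 0), and assume in addition that ⟨dH₁, X₁⟩ = 0. Define Ω₁ = Ω₀Π₁Ω₀ + dH₁ ∧ dH₀ (where (F ∧ G)(v) = ⟨G, v⟩F - ⟨F, v⟩G),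 Yᵢ = Xᵢ + ⟨dHᵢ, Z⟩·Z, and βᵢ = dHᵢ - ⟨dHᵢ, Z⟩·dH₀. Then βᵢ = Ω₀ Yᵢ = Ω₁ Y_{i-1} for all i = 1,...,n+1. -/
open Module

/-- Theorem 3 of the paper, pointwise: bi-presymplectic
representation of a one-Casimir bi-Hamiltonian chain:
βᵢ = Ω₀ Yᵢ = Ω₁ Y_{i-1} for i = 1,...,n+1, where
Ω₁ v = Ω₀Π₁Ω₀ v + (dH₁ ∧ dH₀)(v), Yᵢ = Xᵢ + ⟨dHᵢ,Z⟩ Z, Xᵢ = Π₀ dHᵢ,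
βᵢ = dHᵢ - ⟨dHᵢ,Z⟩ dH₀, and (F ∧ G)(v) = ⟨G,v⟩F - ⟨F,v⟩G. -/
theorem one_casimir_bipresymplectic_chain {V : Type*} [AddCommGroup V] [Module ℝ V]
    [FiniteDimensional ℝ V]
    (P0 P1 : Dual ℝ V →ₗ[ℝ] V) (Om0 : V →ₗ[ℝ] Dual ℝ V)
    (hP0skew : ∀ a b : Dual ℝ V, a (P0 b) = - b (P0 a))
    (hP1skew : ∀ a b : Dual ℝ V, a (P1 b) = - b (P1 a))
    (hOm0skew : ∀ v w : V, Om0 v w = - Om0 w v)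
    (dH : ℕ → Dual ℝ V) (Z : V) (n : ℕ)
    (hdual : dH 0 Z = 1)
    (hkerP0 : LinearMap.ker P0 = Submodule.span ℝ {dH 0})
    (hkerOm0 : LinearMap.ker Om0 = Submodule.span ℝ {Z})
    (hpart : ∀ v : V, P0 (Om0 v) + dH 0 v • Z = v)
    (htop : dH (n + 1) = 0)
    (hchain : ∀ i, 1 ≤ i → i ≤ n + 1 → P0 (dH i) = P1 (dH (i - 1)))
    (hinv : dH 1 (P1 (dH 0)) = 0) :
    ∀ i, 1 ≤ i → i ≤ n + 1 →
      (dH i - dH i Z • dH 0 = Om0 (P0 (dH i) + dH i Z • Z)) ∧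
      (dH i - dH i Z • dH 0 =
        Om0 (P1 (Om0 (P0 (dH (i - 1)) + dH (i - 1) Z • Z)))
          + dH 0 (P0 (dH (i - 1)) + dH (i - 1) Z • Z) • dH 1
          - dH 1 (P0 (dH (i - 1)) + dH (i - 1) Z • Z) • dH 0) := by

  have hOm0Z : Om0 Z = 0 := by
    have h : Z ∈ LinearMap.ker Om0 := by
      rw [hkerOm0]; exact Submodule.mem_span_singleton_self _
    exact h
  have hP0dH0 : P0 (dH 0) = 0 := by
    have h : dH 0 ∈ LinearMap.ker P0 := by
      rw [hkerP0]; exact Submodule.mem_span_singleton_self _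
    exact h
  have key : ∀ α : Dual ℝ V, Om0 (P0 α) = α - α Z • dH 0 := by
    intro α
    ext v
    have h1 : Om0 (P0 α) v = - Om0 v (P0 α) := hOm0skew _ _
    have h2 : Om0 v (P0 α) = - α (P0 (Om0 v)) := hP0skew _ _
    have h3 : P0 (Om0 v) = v - dH 0 v • Z := by
      rw [eq_sub_iff_add_eq]; exact hpart v
    rw [h1, h2, h3]
    simp [map_sub, map_smul]
    ring
  have part1 : ∀ j : ℕ, Om0 (P0 (dH j) + dH j Z • Z) = dH j - dH j Z • dH 0 := by
    intro j
    rw [map_add, map_smul, hOm0Z, key, smul_zero, add_zero]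
  have skew0 : ∀ j : ℕ, dH 0 (P0 (dH j)) = - dH j (P0 (dH 0)) := fun j => hP0skew _ _
  intro i h1i hin
  obtain ⟨j, rfl⟩ : ∃ j, i = j + 1 := ⟨i - 1, (Nat.succ_pred_eq_of_pos h1i).symm⟩
  have hj : j + 1 - 1 = j := by omega
  have hcA : P0 (dH (j + 1)) = P1 (dH j) := by
    have := hchain (j + 1) (by omega) hin; rwa [hj] at this
  have hc1 : P0 (dH 1) = P1 (dH 0) := by
    have := hchain 1 (le_refl 1) (by omega); simpa using this
  refine ⟨(part1 (j + 1)).symm, ?_⟩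
  rw [hj, part1 j]
  have hOm1 : Om0 (P1 (dH j - dH j Z • dH 0))
      = (dH (j + 1) - dH (j + 1) Z • dH 0) - dH j Z • (dH 1 - dH 1 Z • dH 0) := by
    rw [map_sub, map_smul, ← hcA, ← hc1, map_sub, map_smul, key, key]
  have hs0 : dH 0 (P0 (dH j) + dH j Z • Z) = dH j Z := by
    rw [map_add, map_smul, skew0, hP0dH0, hdual]
    simp
  have hs1 : dH 1 (P0 (dH j) + dH j Z • Z) = dH j Z * dH 1 Z := by
    have e1 : dH 1 (P0 (dH j)) = 0 := by
      have a1 : dH 1 (P0 (dH j)) = - dH j (P0 (dH 1)) := hP0skew _ _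
      have a2 : dH j (P1 (dH 0)) = - dH 0 (P1 (dH j)) := hP1skew _ _
      have a3 : dH 0 (P0 (dH (j + 1))) = - dH (j + 1) (P0 (dH 0)) := hP0skew _ _
      rw [a1, hc1, a2, ← hcA, a3, hP0dH0]
      simp
    rw [map_add, map_smul, e1]
    simp [mul_comm]
  rw [hOm1, hs0, hs1]
  module
end

section
/- In the one-Casimir setting above, the vector field Y_n = X_n + ⟨dH_n, Z⟩·Z lies in the kernel of Ω₁ = Ω₀Π₁Ω₀ + dH₁ ∧ dH₀, where X_n = Π₀ dH_n and H_n is a Casimir of Π₁ (Π₁ dH_n = 0). -/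
open Module

/-- Lemma 5 of the paper, pointwise: the vector
Y = X_n + ⟨dH_n,Z⟩ Z lies in the kernel of Ω₁ = Ω₀Π₁Ω₀ + dH₁ ∧ dH₀. -/
theorem kernel_of_Omega1 {V : Type*} [AddCommGroup V] [Module ℝ V]
    [FiniteDimensional ℝ V]
    (P0 P1 : Dual ℝ V →ₗ[ℝ] V) (Om0 : V →ₗ[ℝ] Dual ℝ V)
    (hP0skew : ∀ a b : Dual ℝ V, a (P0 b) = - b (P0 a))
    (hP1skew : ∀ a b : Dual ℝ V, a (P1 b) = - b (P1 a))
    (hOm0skew : ∀ v w : V, Om0 v w = - Om0 w v)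
    (dH0 dH1 dHn : Dual ℝ V) (Z : V)
    (hdual : dH0 Z = 1)
    (hkerP0 : LinearMap.ker P0 = Submodule.span ℝ {dH0})
    (hkerOm0 : LinearMap.ker Om0 = Submodule.span ℝ {Z})
    (hpart : ∀ v : V, P0 (Om0 v) + dH0 v • Z = v)
    (hCasimir : P1 dHn = 0)
    (hchain1 : P0 dH1 = P1 dH0)
    (hinv : dH1 (P1 dH0) = 0) :
    Om0 (P1 (Om0 (P0 dHn + dHn Z • Z)))
      + dH0 (P0 dHn + dHn Z • Z) • dH1
      - dH1 (P0 dHn + dHn Z • Z) • dH0 = 0 := by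
  have hP0dH0 : P0 dH0 = 0 := by
    rw [← LinearMap.mem_ker, hkerP0]
    exact Submodule.mem_span_singleton_self dH0
  have hOm0Z : Om0 Z = 0 := by
    rw [← LinearMap.mem_ker, hkerOm0]
    exact Submodule.mem_span_singleton_self Z
  have key : ∀ a : Dual ℝ V, Om0 (P0 a) = a - a Z • dH0 := by
    intro a
    ext w
    have h := congrArg a (hpart w)
    simp only [map_add, map_smul, smul_eq_mul] at h
    have h2 := hP0skew a (Om0 w)
    have h3 := hOm0skew (P0 a) w
    simp only [LinearMap.sub_apply, LinearMap.smul_apply, smul_eq_mul]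
    linarith
  have hdH0Y : dH0 (P0 dHn) = 0 := by
    rw [hP0skew dH0 dHn, hP0dH0]; simp
  have hdH1Y : dH1 (P0 dHn) = 0 := by
    rw [hP0skew dH1 dHn, hchain1, ← hP1skew dH0 dHn, hCasimir]; simp
  have hOm0Y : Om0 (P0 dHn + dHn Z • Z) = dHn - dHn Z • dH0 := by
    rw [map_add, map_smul, hOm0Z, key]; simp
  have hP1Om0Y : P1 (Om0 (P0 dHn + dHn Z • Z)) = -(dHn Z) • P1 dH0 := by
    rw [hOm0Y, map_sub, map_smul, hCasimir]; simp
  have hOm0P1dH0 : Om0 (P1 dH0) = dH1 - dH1 Z • dH0 := by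
    rw [← hchain1, key]
  rw [hP1Om0Y, map_smul, hOm0P1dH0]
  simp only [map_add, map_smul, smul_eq_mul, hdH0Y, hdH1Y, hdual]
  ext w
  simp only [LinearMap.add_apply, LinearMap.sub_apply, LinearMap.smul_apply,
    LinearMap.zero_apply, smul_eq_mul]
  ring
end

section
/- Multi-Casimir deformation: Let (Π₀, Ω₀) be a dual pair on V with ker Π₀ = span{α₁,...,α_r}, ker Ω₀ = span{Z₁,...,Z_r}, αᵢ(Z_j) = δᵢⱼ. Let Π₁ be skew-symmetric with c_{ij} := ⟨αᵢ, Π₁ α_j⟩ = 0 for all i, j (involutive Casimirs). Then Π_{1d} := Π₀Ω₀Π₁Ω₀Π₀ = Π₁ - Σᵢ X₁^{(i)} ∧ Zᵢ, where X₁^{(i)} = Π₁ αᵢ. -/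
open Module

/-- multi-Casimir deformation with involutive Casimirs:
Π₀Ω₀Π₁Ω₀Π₀ = Π₁ - Σᵢ X₁^{(i)} ∧ Zᵢ, where X₁^{(i)} = Π₁ αᵢ. -/
theorem multi_casimir_deformation {V : Type*} [AddCommGroup V] [Module ℝ V]
    [FiniteDimensional ℝ V] {r : ℕ}
    (P0 : Dual ℝ V →ₗ[ℝ] V) (Om0 : V →ₗ[ℝ] Dual ℝ V)
    (hP0skew : ∀ a b : Dual ℝ V, a (P0 b) = - b (P0 a))
    (hOm0skew : ∀ v w : V, Om0 v w = - Om0 w v)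
    (α : Fin r → Dual ℝ V) (Z : Fin r → V)
    (hZind : LinearIndependent ℝ Z)
    (hdual : ∀ i j, α i (Z j) = if i = j then 1 else 0)
    (hkerP0 : LinearMap.ker P0 = Submodule.span ℝ (Set.range α))
    (hkerOm0 : LinearMap.ker Om0 = Submodule.span ℝ (Set.range Z))
    (hpart : ∀ v : V, P0 (Om0 v) + ∑ i, α i v • Z i = v)
    (P1 : Dual ℝ V →ₗ[ℝ] V)
    (hP1skew : ∀ a b : Dual ℝ V, a (P1 b) = - b (P1 a))
    (hinv : ∀ i j, α i (P1 (α j)) = 0) :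
    ∀ β : Dual ℝ V,
      P0 (Om0 (P1 (Om0 (P0 β)))) =
        P1 β - ∑ i, (β (Z i) • P1 (α i) - β (P1 (α i)) • Z i) := by
  intro β
  -- Step 1: Ω₀(P0 β) = β - ∑ β(Zᵢ) • αᵢ
  have key : Om0 (P0 β) = β - ∑ i, β (Z i) • α i := by
    ext w
    have h1 : Om0 (P0 β) w = - Om0 w (P0 β) := hOm0skew _ _
    have h2 : Om0 w (P0 β) = - β (P0 (Om0 w)) := hP0skew _ _
    have h3 : P0 (Om0 w) = w - ∑ i, α i w • Z i := eq_sub_of_add_eq (hpart w)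
    rw [h1, h2, h3]
    simp [map_sum, map_smul, mul_comm]
  have hv : P1 (Om0 (P0 β)) = P1 β - ∑ i, β (Z i) • P1 (α i) := by
    rw [key]; simp [map_sum]
  rw [hv]
  have hpart2 := hpart (P1 β - ∑ i, β (Z i) • P1 (α i))
  have hα : ∀ j, α j (P1 β - ∑ i, β (Z i) • P1 (α i)) = - β (P1 (α j)) := by
    intro j
    simp [map_sum, hinv, hP1skew (α j) β]
  have : P0 (Om0 (P1 β - ∑ i, β (Z i) • P1 (α i)))
      = (P1 β - ∑ i, β (Z i) • P1 (α i)) - ∑ j, α j (P1 β - ∑ i, β (Z i) • P1 (α i)) • Z j :=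
    eq_sub_of_add_eq hpart2
  rw [this]
  simp only [hα]
  simp only [neg_smul, Finset.sum_neg_distrib, Finset.sum_sub_distrib]
  abel
end

section
/- Let u, v, u', v' be vectors in a real vector space V and define the bivector wedge (a ∧ b)(β) = β(b)a - β(a)b as a map V* → V. If the 5×5 skew matrices Π₀ and Π₁ from the Henon-Heiles example are given (on coordinates (q¹, q², p₁, p₂, c)), with H₀ = c, H₁ = ½p₁² + ½p₂² + (q¹)³ + ½q¹(q²)² - cq¹, H₂ = ½q²p₁p₂ - ½q¹p₂² + (1/16)(q²)⁴ + ¼(q¹)²(q²)² - ¼c(q²)², then at every point the chain relations hold: Π₀ dH₀ = 0, Π₀ dH₁ = Π₁ dH₀, Π₀ dH₂ = Π₁ dH₁, and Π₁ dH₂ = 0. -/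
/-- Gradient of a function on ℝ⁵ (column of partial derivatives). -/
noncomputable def grad5 (H : (Fin 5 → ℝ) → ℝ) (p : Fin 5 → ℝ) : Fin 5 → ℝ :=
  fun i => fderiv ℝ H p (Pi.single i 1)

/-- Canonical degenerate Poisson matrix Π₀ on ℝ⁵ with coordinates (q¹,q²,p₁,p₂,c). -/
def HHPi0 : Matrix (Fin 5) (Fin 5) ℝ :=
  !![0, 0, 1, 0, 0;
     0, 0, 0, 1, 0;
     -1, 0, 0, 0, 0;
     0, -1, 0, 0, 0;
     0, 0, 0, 0, 0]

/-- Second Poisson matrix Π₁ of the Henon-Heiles system; p = (q¹,q²,p₁,p₂,c). -/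
noncomputable def HHPi1 (p : Fin 5 → ℝ) : Matrix (Fin 5) (Fin 5) ℝ :=
  !![0, 0, p 0, p 1 / 2, p 2;
     0, 0, p 1 / 2, 0, p 3;
     -p 0, -(p 1) / 2, 0, p 3 / 2, -3 * (p 0) ^ 2 - (p 1) ^ 2 / 2 + p 4;
     -(p 1) / 2, 0, -(p 3) / 2, 0, -(p 0) * p 1;
     -(p 2), -(p 3), 3 * (p 0) ^ 2 + (p 1) ^ 2 / 2 - p 4, p 0 * p 1, 0]

def HH0 (p : Fin 5 → ℝ) : ℝ := p 4

noncomputable def HH1 (p : Fin 5 → ℝ) : ℝ :=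
  (p 2) ^ 2 / 2 + (p 3) ^ 2 / 2 + (p 0) ^ 3 + p 0 * (p 1) ^ 2 / 2 - p 4 * p 0

noncomputable def HH2 (p : Fin 5 → ℝ) : ℝ :=
  p 1 * p 2 * p 3 / 2 - p 0 * (p 3) ^ 2 / 2 + (p 1) ^ 4 / 16
    + (p 0) ^ 2 * (p 1) ^ 2 / 4 - p 4 * (p 1) ^ 2 / 4

lemma grad5_HH0 (p : Fin 5 → ℝ) : grad5 HH0 p = ![0, 0, 0, 0, 1] := by
  ext i
  unfold grad5 HH0
  fin_cases i <;> simp (disch := fun_prop) [fderiv_apply, Pi.single_apply]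

lemma grad5_HH1 (p : Fin 5 → ℝ) :
    grad5 HH1 p = ![3 * p 0 ^ 2 + p 1 ^ 2 / 2 - p 4, p 0 * p 1, p 2, p 3, -p 0] := by
  ext i
  unfold grad5 HH1
  -- `fderiv` has no rule for division by a constant, hence `div_eq_mul_inv`
  fin_cases i <;>
    simp (disch := fun_prop) [div_eq_mul_inv, fderiv_fun_add, fderiv_fun_sub, fderiv_fun_mul,
      fderiv_fun_pow, fderiv_apply, Pi.single_apply] <;> ring

lemma grad5_HH2 (p : Fin 5 → ℝ) :
    grad5 HH2 p = ![-(p 3) ^ 2 / 2 + p 0 * p 1 ^ 2 / 2,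
      p 2 * p 3 / 2 + p 1 ^ 3 / 4 + p 0 ^ 2 * p 1 / 2 - p 4 * p 1 / 2,
      p 1 * p 3 / 2, p 1 * p 2 / 2 - p 0 * p 3, -(p 1) ^ 2 / 4] := by
  ext i
  unfold grad5 HH2
  fin_cases i <;>
    simp (disch := fun_prop) [div_eq_mul_inv, fderiv_fun_add, fderiv_fun_sub, fderiv_fun_mul,
      fderiv_fun_pow, fderiv_apply, Pi.single_apply] <;> ring

/-- the bi-Hamiltonian chain of the integrable Henon-Heiles system:
Π₀dH₀ = 0, Π₀dH₁ = Π₁dH₀, Π₀dH₂ = Π₁dH₁, Π₁dH₂ = 0, at every point. -/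
theorem henon_heiles_chain : ∀ p : Fin 5 → ℝ,
    HHPi0.mulVec (grad5 HH0 p) = 0 ∧
    HHPi0.mulVec (grad5 HH1 p) = (HHPi1 p).mulVec (grad5 HH0 p) ∧
    HHPi0.mulVec (grad5 HH2 p) = (HHPi1 p).mulVec (grad5 HH1 p) ∧
    (HHPi1 p).mulVec (grad5 HH2 p) = 0 := by
  intro p
  rw [grad5_HH0, grad5_HH1, grad5_HH2]
  refine ⟨?_, ?_, ?_, ?_⟩ <;> ext i <;> fin_cases i <;>
    simp [Matrix.mulVec, dotProduct, Fin.sum_univ_five, HHPi0, HHPi1] <;> ring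
end
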